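/- arXiv:2007.08321 — 7 statements merged into one kernel-verified Lean document; each statement's English description precedes it below -/
import Mathlib

section
/- Let φ : 𝒯 → [0,∞) be such that ψ(z) := φ(z,z) is continuously differentiable on [0,∞); for every z > 0 the map y ↦ φ(y,z) is continuously differentiable, non-decreasing and convex on [0,z]; and ∂_yφ(z,z) = ψ'(z) for every z > 0. If δ̄ < +∞, then φ is constant on {(y,z) ∈ 𝒯 : z ≥ δ̄}, and more precisely φ(y,z) = ψ(δ̄) for every (y,z) ∈ 𝒯 with z ≥ δ̄. -/
/-!
Continuity of `ψ` from the right at `δ̄` extends its constancy on `(δ̄, ∞)` to `[δ̄, ∞)`, so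
`ψ'(z) = 0` for `z ≥ δ̄`. Hence, for `z > 0`, the convex function `y ↦ φ(y,z)` has derivative
`∂_yφ(z,z) = ψ'(z) = 0` at the right end of `[0,z]`: it lies above its value at `z`, and being
non-decreasing it is constant there. Thus `φ(y,z) = ψ(z) = ψ(δ̄)`.
-/

open Set Filter Topology

lemma eq_of_csInf_lt_of_eq_beyond_mem {f : ℝ → ℝ} {S : Set ℝ}
    (hS : ∀ s ∈ S, ∀ z₁ z₂, s ≤ z₁ → s ≤ z₂ → f z₁ = f z₂) (hne : S.Nonempty)
    (hbdd : BddBelow S) {z₁ z₂ : ℝ} (h₁ : sInf S < z₁) (h₂ : sInf S < z₂) :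
    f z₁ = f z₂ := by
  obtain ⟨s, hs, hs_lt⟩ := (csInf_lt_iff hbdd hne).1 (lt_min h₁ h₂)
  exact hS s hs z₁ z₂ (hs_lt.le.trans (min_le_left _ _)) (hs_lt.le.trans (min_le_right _ _))

lemma eq_of_le_of_const_on_Ioi {f : ℝ → ℝ} {a : ℝ}
    (hconst : ∀ z₁ z₂, a < z₁ → a < z₂ → f z₁ = f z₂)
    (hcont : ContinuousWithinAt f (Ioi a) a) {z : ℝ} (hz : a ≤ z) : f z = f a := by
  rcases hz.eq_or_lt with rfl | hz
  · rfl
  have htail : Tendsto f (𝓝[>] a) (𝓝 (f z)) :=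
    tendsto_const_nhds.congr' <| eventually_nhdsWithin_of_forall fun w hw => hconst z w hz hw
  exact tendsto_nhds_unique htail hcont.tendsto

lemma HasDerivWithinAt.eq_zero_of_const_on_Ici {f : ℝ → ℝ} {f' a z : ℝ}
    (hf : HasDerivWithinAt f f' (Ici a) z) (hconst : ∀ w, a ≤ w → f w = f a) (hz : a ≤ z) :
    f' = 0 := by
  have hzero : HasDerivWithinAt f 0 (Ici a) z :=
    (hasDerivWithinAt_const z (Ici a) (f a)).congr (fun w hw => hconst w hw) (hconst z hz)
  exact (uniqueDiffOn_Ici a z hz).eq_deriv _ hf hzero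

lemma ConvexOn.eq_right_of_monotoneOn_of_hasDerivWithinAt_zero {f : ℝ → ℝ} {a b y : ℝ}
    (hconv : ConvexOn ℝ (Icc a b) f) (hmono : MonotoneOn f (Icc a b))
    (hderiv : HasDerivWithinAt f 0 (Icc a b) b) (hy : y ∈ Icc a b) : f y = f b := by
  have hb : b ∈ Icc a b := ⟨hy.1.trans hy.2, le_rfl⟩
  rcases hy.2.eq_or_lt with rfl | hyb
  · rfl
  have hslope : slope f y b ≤ 0 := hconv.slope_le_of_hasDerivWithinAt hy hb hyb hderiv
  rw [slope_def_field, div_le_iff₀ (sub_pos.2 hyb), zero_mul, sub_nonpos] at hslope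
  exact le_antisymm (hmono hy hb hy.2) hslope

theorem stmt_0_general
    (φ : ℝ → ℝ → ℝ) (ψ' : ℝ → ℝ) (φy : ℝ → ℝ → ℝ)
    -- ψ(z) := φ(z,z) is C¹ on [0,∞), with derivative ψ'
    (hψ : ∀ z ∈ Ici (0:ℝ), HasDerivWithinAt (fun w => φ w w) (ψ' z) (Ici 0) z)
    -- for every z > 0, y ↦ φ(y,z) is C¹ on [0,z] with derivative φy(·,z),
    -- non-decreasing and convex there
    (hφy : ∀ z : ℝ, 0 < z → ∀ y ∈ Icc (0:ℝ) z,
      HasDerivWithinAt (fun w => φ w z) (φy y z) (Icc 0 z) y)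
    (hmono : ∀ z : ℝ, 0 < z → MonotoneOn (fun y => φ y z) (Icc 0 z))
    (hconv : ∀ z : ℝ, 0 < z → ConvexOn ℝ (Icc 0 z) (fun y => φ y z))
    -- ∂_yφ(z,z) = ψ'(z) for every z > 0
    (hdiag : ∀ z : ℝ, 0 < z → φy z z = ψ' z)
    -- S is the set whose infimum defines δ̄; S nonempty means δ̄ < +∞
    (S : Set ℝ)
    (hS_def : S = {z : ℝ | 0 < z ∧ ∀ z₁ z₂ : ℝ, z ≤ z₁ → z ≤ z₂ → φ z₁ z₁ = φ z₂ z₂})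
    (hS_ne : S.Nonempty) :
    ∀ y z : ℝ, 0 ≤ y → y ≤ z → sInf S ≤ z → φ y z = φ (sInf S) (sInf S) := by
  set δ := sInf S
  have hS : ∀ s ∈ S, 0 < s ∧ ∀ z₁ z₂ : ℝ, s ≤ z₁ → s ≤ z₂ → φ z₁ z₁ = φ z₂ z₂ :=
    fun s hs => by rwa [hS_def] at hs
  have hδ0 : 0 ≤ δ := le_csInf hS_ne fun s hs => (hS s hs).1.le
  have hψ_tail : ∀ z, δ ≤ z → φ z z = φ δ δ := fun z hz =>
    eq_of_le_of_const_on_Ioi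
      (fun _ _ => eq_of_csInf_lt_of_eq_beyond_mem (fun s hs => (hS s hs).2) hS_ne
        ⟨0, fun s hs => (hS s hs).1.le⟩)
      ((hψ δ hδ0).continuousWithinAt.mono fun w hw => hδ0.trans hw.le) hz
  intro y z hy hyz hδz
  rcases (hδ0.trans hδz).eq_or_lt with rfl | hz
  · rw [le_antisymm hyz hy, le_antisymm hδz hδ0]
  have hψ'z : ψ' z = 0 :=
    ((hψ z hz.le).mono fun w hw => hδ0.trans hw).eq_zero_of_const_on_Ici hψ_tail hδz
  have hφy_zero : HasDerivWithinAt (fun w => φ w z) 0 (Icc 0 z) z := by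
    have := hφy z hz z ⟨hz.le, le_rfl⟩
    rwa [hdiag z hz, hψ'z] at this
  rw [(hconv z hz).eq_right_of_monotoneOn_of_hasDerivWithinAt_zero (hmono z hz) hφy_zero ⟨hy, hyz⟩]
  exact hψ_tail z hδz

/-- If `δ̄ < +∞` (i.e. the set `S` defining `δ̄` as its infimum is nonempty), then the
loading–unloading density `φ` is constant, equal to `ψ(δ̄) = φ(δ̄,δ̄)`, on the part of
`𝒯 = {(y,z) : 0 ≤ y ≤ z}` where `z ≥ δ̄`. -/
theorem stmt_0
    (φ : ℝ → ℝ → ℝ) (ψ' : ℝ → ℝ) (φy : ℝ → ℝ → ℝ)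
    -- φ maps 𝒯 into [0,∞)
    (hφ_nonneg : ∀ y z : ℝ, 0 ≤ y → y ≤ z → 0 ≤ φ y z)
    -- ψ(z) := φ(z,z) is C¹ on [0,∞), with derivative ψ'
    (hψ : ∀ z ∈ Ici (0:ℝ), HasDerivWithinAt (fun w => φ w w) (ψ' z) (Ici 0) z)
    (hψ'cont : ContinuousOn ψ' (Ici 0))
    -- for every z > 0, y ↦ φ(y,z) is C¹ on [0,z] with derivative φy(·,z),
    -- non-decreasing and convex there
    (hφy : ∀ z : ℝ, 0 < z → ∀ y ∈ Icc (0:ℝ) z,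
      HasDerivWithinAt (fun w => φ w z) (φy y z) (Icc 0 z) y)
    (hφycont : ∀ z : ℝ, 0 < z → ContinuousOn (fun y => φy y z) (Icc 0 z))
    (hmono : ∀ z : ℝ, 0 < z → MonotoneOn (fun y => φ y z) (Icc 0 z))
    (hconv : ∀ z : ℝ, 0 < z → ConvexOn ℝ (Icc 0 z) (fun y => φ y z))
    -- ∂_yφ(z,z) = ψ'(z) for every z > 0
    (hdiag : ∀ z : ℝ, 0 < z → φy z z = ψ' z)
    -- S is the set whose infimum defines δ̄; S nonempty means δ̄ < +∞
    (S : Set ℝ)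
    (hS_def : S = {z : ℝ | 0 < z ∧ ∀ z₁ z₂ : ℝ, z ≤ z₁ → z ≤ z₂ → φ z₁ z₁ = φ z₂ z₂})
    (hS_ne : S.Nonempty) :
    ∀ y z : ℝ, 0 ≤ y → y ≤ z → sInf S ≤ z → φ y z = φ (sInf S) (sInf S) :=
  stmt_0_general φ ψ' φy hψ hφy hmono hconv hdiag S hS_def hS_ne
end

section
/- Let φ : 𝒯 → [0,∞) be such that ψ(z) := φ(z,z) is continuously differentiable on [0,∞); for every z > 0 the map y ↦ φ(y,z) is continuously differentiable, non-decreasing and convex on [0,z]; and ∂_yφ(z,z) = ψ'(z) for every z > 0. Then φ(y,z) = φ(min(y,δ̄), min(z,δ̄)) for every (y,z) ∈ 𝒯 (the identity being trivial when δ̄ = +∞, where min with +∞ is the identity). -/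
/-!
On the diagonal, `ψ` is constant on `[s, ∞)` for every `s ∈ S`, hence on `(δ̄, ∞)`, and by
right-continuity on `[δ̄, ∞)`. For `w ≥ δ̄` with `w > 0` this forces `∂_yφ(w,w) = ψ'(w) = 0`; a
non-decreasing convex function on `[0,w]` whose left derivative at `w` vanishes is constant, so
`φ(y,w) = ψ(w)` for `y ≤ w`. Both sides of the identity therefore equal `ψ(δ̄)` when `z > δ̄`.
-/

open Set

theorem HasDerivWithinAt.eq_zero_of_forall_Ici {f : ℝ → ℝ} {f' a : ℝ}
    (hf : HasDerivWithinAt f f' (Ici a) a) (hconst : ∀ t, a ≤ t → f t = f a) : f' = 0 :=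
  (uniqueDiffOn_Ici a a self_mem_Ici).eq_deriv _ hf <|
    (hasDerivWithinAt_const a (Ici a) (f a)).congr hconst rfl

theorem MonotoneOn.eq_of_convexOn_of_hasDerivWithinAt_zero {f : ℝ → ℝ} {S : Set ℝ} {x b : ℝ}
    (hmono : MonotoneOn f S) (hconv : ConvexOn ℝ S f) (hb : b ∈ S)
    (hf : HasDerivWithinAt f 0 S b) (hx : x ∈ S) (hxb : x ≤ b) : f x = f b := by
  rcases hxb.eq_or_lt with rfl | hlt
  · rfl
  have hslope : (f b - f x) / (b - x) ≤ 0 := by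
    simpa only [slope_def_field] using hconv.slope_le_of_hasDerivWithinAt hx hb hlt hf
  have hfb : f b ≤ f x := by
    have := (div_le_iff₀ (sub_pos.2 hlt)).1 hslope
    linarith
  exact le_antisymm (hmono hx hb hxb) hfb

theorem apply_eq_apply_csInf_of_constant_from_mem {g : ℝ → ℝ} {S : Set ℝ} (hne : S.Nonempty)
    (hbdd : BddBelow S) (hS : ∀ s ∈ S, ∀ t, s ≤ t → g t = g s)
    (hg : ContinuousWithinAt g (Ioi (sInf S)) (sInf S)) {w : ℝ} (hw : sInf S ≤ w) :
    g w = g (sInf S) := by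
  rcases hw.eq_or_lt with hw | hw
  · rw [hw]
  have hconst : ∀ t, sInf S < t → g t = g w := by
    intro t ht
    obtain ⟨s, hs, hst⟩ := (csInf_lt_iff hbdd hne).1 (lt_min ht hw)
    rw [hS s hs t (hst.le.trans (min_le_left _ _)), hS s hs w (hst.le.trans (min_le_right _ _))]
  refine tendsto_nhds_unique (tendsto_const_nhds.congr' ?_) hg
  filter_upwards [self_mem_nhdsWithin] with t ht
  exact (hconst t ht).symm

open Classical in
theorem stmt_1_general
    (φ : ℝ → ℝ → ℝ) (ψ' : ℝ → ℝ) (φy : ℝ → ℝ → ℝ)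
    -- ψ(z) := φ(z,z) is C¹ on [0,∞), with derivative ψ'
    (hψ : ∀ z ∈ Ici (0:ℝ), HasDerivWithinAt (fun w => φ w w) (ψ' z) (Ici 0) z)
    -- for every z > 0, y ↦ φ(y,z) is C¹ on [0,z] with derivative φy(·,z),
    -- non-decreasing and convex there
    (hφy : ∀ z : ℝ, 0 < z → ∀ y ∈ Icc (0:ℝ) z,
      HasDerivWithinAt (fun w => φ w z) (φy y z) (Icc 0 z) y)
    (hmono : ∀ z : ℝ, 0 < z → MonotoneOn (fun y => φ y z) (Icc 0 z))
    (hconv : ∀ z : ℝ, 0 < z → ConvexOn ℝ (Icc 0 z) (fun y => φ y z))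
    -- ∂_yφ(z,z) = ψ'(z) for every z > 0
    (hdiag : ∀ z : ℝ, 0 < z → φy z z = ψ' z)
    -- S is the set whose infimum defines δ̄ (δ̄ = +∞ exactly when S = ∅)
    (S : Set ℝ)
    (hS_def : S = {z : ℝ | 0 < z ∧ ∀ z₁ z₂ : ℝ, z ≤ z₁ → z ≤ z₂ → φ z₁ z₁ = φ z₂ z₂}) :
    ∀ y z : ℝ, 0 ≤ y → y ≤ z →
      φ y z = φ (if S.Nonempty then min y (sInf S) else y)
                (if S.Nonempty then min z (sInf S) else z) := by
  intro y z hy hyz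
  by_cases hne : S.Nonempty
  swap
  · simp only [hne, if_false]
  simp only [hne, if_true]
  have hS : ∀ s ∈ S, 0 < s ∧ ∀ z₁ z₂ : ℝ, s ≤ z₁ → s ≤ z₂ → φ z₁ z₁ = φ z₂ z₂ := by
    rw [hS_def]
    exact fun s hs => hs
  set δ := sInf S
  have hδ0 : 0 ≤ δ := le_csInf hne fun s hs => (hS s hs).1.le
  have diag_const : ∀ w, δ ≤ w → φ w w = φ δ δ :=
    fun w => apply_eq_apply_csInf_of_constant_from_mem (g := fun t => φ t t) hne
      ⟨0, fun s hs => (hS s hs).1.le⟩ (fun s hs t hst => (hS s hs).2 t s hst le_rfl)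
      ((hψ δ hδ0).continuousWithinAt.mono fun t ht => hδ0.trans (le_of_lt ht))
  have row_const : ∀ w, 0 < w → δ ≤ w → ∀ y ∈ Icc 0 w, φ y w = φ w w := by
    intro w hw hδw y hy
    have hψ'w : ψ' w = 0 :=
      ((hψ w hw.le).mono (Ici_subset_Ici.2 hw.le)).eq_zero_of_forall_Ici fun t hwt =>
        (diag_const t (hδw.trans hwt)).trans (diag_const w hδw).symm
    have hφy_w := hφy w hw w ⟨hw.le, le_rfl⟩
    rw [hdiag w hw, hψ'w] at hφy_w
    exact (hmono w hw).eq_of_convexOn_of_hasDerivWithinAt_zero (hconv w hw)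
      ⟨hw.le, le_rfl⟩ hφy_w hy hy.2
  rcases le_or_gt z δ with hzδ | hδz
  · rw [min_eq_left (hyz.trans hzδ), min_eq_left hzδ]
  rw [min_eq_right hδz.le, row_const z (hδ0.trans_lt hδz) hδz.le y ⟨hy, hyz⟩,
    diag_const z hδz.le]
  rcases hδ0.eq_or_lt with hδ | hδpos
  · rw [← hδ, min_eq_right hy]
  · rw [row_const δ hδpos le_rfl _ ⟨le_min hy hδ0, min_le_right _ _⟩]

open Classical in
/-- `φ(y,z) = φ(min(y,δ̄), min(z,δ̄))` on `𝒯 = {(y,z) : 0 ≤ y ≤ z}`, where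
`δ̄ = inf S` with the convention `inf ∅ = +∞` (so if `S = ∅` the minima with `+∞`
are the identity and the claim is trivial). -/
theorem stmt_1
    (φ : ℝ → ℝ → ℝ) (ψ' : ℝ → ℝ) (φy : ℝ → ℝ → ℝ)
    -- φ maps 𝒯 into [0,∞)
    (hφ_nonneg : ∀ y z : ℝ, 0 ≤ y → y ≤ z → 0 ≤ φ y z)
    -- ψ(z) := φ(z,z) is C¹ on [0,∞), with derivative ψ'
    (hψ : ∀ z ∈ Ici (0:ℝ), HasDerivWithinAt (fun w => φ w w) (ψ' z) (Ici 0) z)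
    (hψ'cont : ContinuousOn ψ' (Ici 0))
    -- for every z > 0, y ↦ φ(y,z) is C¹ on [0,z] with derivative φy(·,z),
    -- non-decreasing and convex there
    (hφy : ∀ z : ℝ, 0 < z → ∀ y ∈ Icc (0:ℝ) z,
      HasDerivWithinAt (fun w => φ w z) (φy y z) (Icc 0 z) y)
    (hφycont : ∀ z : ℝ, 0 < z → ContinuousOn (fun y => φy y z) (Icc 0 z))
    (hmono : ∀ z : ℝ, 0 < z → MonotoneOn (fun y => φ y z) (Icc 0 z))
    (hconv : ∀ z : ℝ, 0 < z → ConvexOn ℝ (Icc 0 z) (fun y => φ y z))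
    -- ∂_yφ(z,z) = ψ'(z) for every z > 0
    (hdiag : ∀ z : ℝ, 0 < z → φy z z = ψ' z)
    -- S is the set whose infimum defines δ̄ (δ̄ = +∞ exactly when S = ∅)
    (S : Set ℝ)
    (hS_def : S = {z : ℝ | 0 < z ∧ ∀ z₁ z₂ : ℝ, z ≤ z₁ → z ≤ z₂ → φ z₁ z₁ = φ z₂ z₂}) :
    ∀ y z : ℝ, 0 ≤ y → y ≤ z →
      φ y z = φ (if S.Nonempty then min y (sInf S) else y)
                (if S.Nonempty then min z (sInf S) else z) :=
  stmt_1_general φ ψ' φy hψ hφy hmono hconv hdiag S hS_def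
end

section
/- Let f, g ∈ ℝ with f ≥ |g|, and let φ : 𝒯 → [0,∞) satisfy: the function ψ(z) := φ(z,z) is differentiable on [0,∞); for every z > 0 the map y ↦ φ(y,z) is differentiable on [0,z]; and ∂_yφ(z,z) = ψ'(z) for every z > 0. Then for every v ∈ ℝ the one-sided limit lim_{h→0⁺} (φ(|g+hv|, max(f,|g+hv|)) − φ(|g|,f))/h exists and equals: ∂_yφ(|g|,f)·sgn(g)·v if f > |g| > 0; ψ'(|g|)·sgn(g)·v if f = |g| > 0; ∂_yφ(0,f)·|v| if f > |g| = 0; and ψ'(0)·|v| if f = |g| = 0; here sgn denotes the signum function. -/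
open Set Filter Topology

/-!
With `G y := φ(y, max f y)` and `u h := |g + h v|`, the difference quotient is the right-hand
slope of `G ∘ u` at `0`, so the limit is `G'(|g|) · u'(0⁺)` by the chain rule. For `h ≥ 0`,
`u` is differentiable from the right with `u'(0⁺) = sgn(g) v` if `g ≠ 0` and `|v|` if `g = 0`.
On `[0, f]` we have `G = φ(·, f)`, and on `[f, ∞)` we have `G = ψ`; so `G'(y) = ∂_yφ(y, f)`
for `y < f`, and at the kink `y = f` the two one-sided derivatives agree by `∂_yφ(f,f) = ψ'(f)`.
-/

theorem HasDerivWithinAt.tendsto_slope_zero_right_of_Ici {F : ℝ → ℝ} {c : ℝ}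
    (h : HasDerivWithinAt F c (Ici 0) 0) :
    Tendsto (fun t => (F t - F 0) / t) (𝓝[>] 0) (𝓝 c) := by
  refine (hasDerivWithinAt_iff_tendsto_slope' (lt_irrefl 0)).1
    (hasDerivWithinAt_Ioi_iff_Ici.2 h) |>.congr fun t => ?_
  rw [slope_def_field, sub_zero]

theorem hasDerivAt_abs_add_mul {g : ℝ} (hg : g ≠ 0) (v : ℝ) :
    HasDerivAt (fun h => |g + h * v|) (Real.sign g * v) 0 := by
  have hlin : HasDerivAt (fun h => g + h * v) v 0 := (hasDerivAt_mul_const v).const_add g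
  rcases hg.lt_or_gt with hg | hg
  · simpa [Function.comp_def, Real.sign_of_neg hg] using
      (hasDerivAt_abs_neg (by simpa using hg)).comp 0 hlin
  · simpa [Function.comp_def, Real.sign_of_pos hg] using
      (hasDerivAt_abs_pos (by simpa using hg)).comp 0 hlin

theorem hasDerivWithinAt_abs_mul_Ici (v : ℝ) :
    HasDerivWithinAt (fun h => |h * v|) |v| (Ici 0) 0 :=
  (hasDerivAt_mul_const |v|).hasDerivWithinAt.congr
    (fun h hh => by rw [abs_mul, abs_of_nonneg (mem_Ici.1 hh)]) (by simp)

section MaxDiagonal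

variable {φ : ℝ → ℝ → ℝ} {ψ' : ℝ → ℝ} {φy : ℝ → ℝ → ℝ}

theorem hasDerivWithinAt_apply_max_of_lt
    (hφy : ∀ z : ℝ, 0 < z → ∀ y ∈ Icc (0:ℝ) z,
      HasDerivWithinAt (fun w => φ w z) (φy y z) (Icc 0 z) y)
    {f y : ℝ} (hy : 0 ≤ y) (hyf : y < f) :
    HasDerivWithinAt (fun w => φ w (max f w)) (φy y f) (Ici 0) y := by
  have hIcc : Icc 0 f ∈ 𝓝[Ici 0] y := by
    rw [← Ici_inter_Iic]
    exact inter_mem_nhdsWithin _ (Iic_mem_nhds hyf)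
  exact ((hφy f (hy.trans_lt hyf) y ⟨hy, hyf.le⟩).congr (fun w hw => by rw [max_eq_left hw.2])
    (by rw [max_eq_left hyf.le])).mono_of_mem_nhdsWithin hIcc

theorem hasDerivWithinAt_apply_max_self
    (hψ : ∀ z ∈ Ici (0:ℝ), HasDerivWithinAt (fun w => φ w w) (ψ' z) (Ici 0) z)
    (hφy : ∀ z : ℝ, 0 < z → ∀ y ∈ Icc (0:ℝ) z,
      HasDerivWithinAt (fun w => φ w z) (φy y z) (Icc 0 z) y)
    (hdiag : ∀ z : ℝ, 0 < z → φy z z = ψ' z)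
    {y : ℝ} (hy : 0 ≤ y) :
    HasDerivWithinAt (fun w => φ w (max y w)) (ψ' y) (Ici 0) y := by
  have hright : HasDerivWithinAt (fun w => φ w (max y w)) (ψ' y) (Ici y) y :=
    ((hψ y hy).mono (Ici_subset_Ici.2 hy)).congr
      (fun w hw => by rw [max_eq_right (mem_Ici.1 hw)]) (by rw [max_self])
  rcases hy.eq_or_lt with rfl | hy
  · exact hright
  have hleft : HasDerivWithinAt (fun w => φ w (max y w)) (ψ' y) (Icc 0 y) y := by
    rw [← hdiag y hy]
    exact (hφy y hy y ⟨hy.le, le_rfl⟩).congr (fun w hw => by rw [max_eq_left hw.2])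
      (by rw [max_self])
  rw [← Icc_union_Ici_eq_Ici hy.le]
  exact hleft.union hright

end MaxDiagonal

theorem stmt_2_general
    (φ : ℝ → ℝ → ℝ) (ψ' : ℝ → ℝ) (φy : ℝ → ℝ → ℝ)
    -- ψ(z) := φ(z,z) is differentiable on [0,∞) with derivative ψ'
    (hψ : ∀ z ∈ Ici (0:ℝ), HasDerivWithinAt (fun w => φ w w) (ψ' z) (Ici 0) z)
    -- for every z > 0, y ↦ φ(y,z) is differentiable on [0,z] with derivative φy(·,z)
    (hφy : ∀ z : ℝ, 0 < z → ∀ y ∈ Icc (0:ℝ) z,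
      HasDerivWithinAt (fun w => φ w z) (φy y z) (Icc 0 z) y)
    -- ∂_yφ(z,z) = ψ'(z) for every z > 0
    (hdiag : ∀ z : ℝ, 0 < z → φy z z = ψ' z)
    (f g : ℝ) (hfg : |g| ≤ f) :
    ∀ v : ℝ,
      Tendsto (fun h : ℝ => (φ |g + h * v| (max f |g + h * v|) - φ |g| f) / h)
        (nhdsWithin 0 (Ioi 0))
        (nhds (if 0 < |g| then
                 (if f = |g| then ψ' |g| else φy |g| f) * Real.sign g * v
               else
                 (if f = 0 then ψ' 0 else φy 0 f) * |v|)) := by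
  intro v
  have hG : HasDerivWithinAt (fun w => φ w (max f w))
      (if f = |g| then ψ' |g| else φy |g| f) (Ici 0) |g| := by
    split_ifs with hf
    · subst hf
      exact hasDerivWithinAt_apply_max_self hψ hφy hdiag (abs_nonneg g)
    · exact hasDerivWithinAt_apply_max_of_lt hφy (abs_nonneg g) (hfg.lt_of_ne' hf)
  have hmaps : MapsTo (fun h : ℝ => |g + h * v|) (Ici 0) (Ici 0) :=
    fun _ _ => mem_Ici.2 (abs_nonneg _)
  rcases eq_or_ne g 0 with rfl | hg
  · simp only [abs_zero, lt_irrefl, if_false] at hG ⊢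
    have hcomp :=
      hG.comp_of_eq 0 (hasDerivWithinAt_abs_mul_Ici v) (by simpa using hmaps) (by simp)
    simpa [max_eq_left (abs_nonneg 0 |>.trans hfg)] using hcomp.tendsto_slope_zero_right_of_Ici
  · rw [if_pos (abs_pos.2 hg), mul_assoc]
    have hcomp :=
      hG.comp_of_eq 0 (hasDerivAt_abs_add_mul hg v).hasDerivWithinAt hmaps (by simp)
    simpa [max_eq_left hfg] using hcomp.tendsto_slope_zero_right_of_Ici

/-- One-sided limit of `h ↦ (φ(|g+hv|, max(f,|g+hv|)) − φ(|g|,f))/h` as `h → 0⁺`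
(Lemma on the derivative of the cohesive energy density along a variation). -/
theorem stmt_2
    (φ : ℝ → ℝ → ℝ) (ψ' : ℝ → ℝ) (φy : ℝ → ℝ → ℝ)
    -- φ maps 𝒯 into [0,∞)
    (hφ_nonneg : ∀ y z : ℝ, 0 ≤ y → y ≤ z → 0 ≤ φ y z)
    -- ψ(z) := φ(z,z) is differentiable on [0,∞) with derivative ψ'
    (hψ : ∀ z ∈ Ici (0:ℝ), HasDerivWithinAt (fun w => φ w w) (ψ' z) (Ici 0) z)
    -- for every z > 0, y ↦ φ(y,z) is differentiable on [0,z] with derivative φy(·,z)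
    (hφy : ∀ z : ℝ, 0 < z → ∀ y ∈ Icc (0:ℝ) z,
      HasDerivWithinAt (fun w => φ w z) (φy y z) (Icc 0 z) y)
    -- ∂_yφ(z,z) = ψ'(z) for every z > 0
    (hdiag : ∀ z : ℝ, 0 < z → φy z z = ψ' z)
    (f g : ℝ) (hfg : |g| ≤ f) :
    ∀ v : ℝ,
      Tendsto (fun h : ℝ => (φ |g + h * v| (max f |g + h * v|) - φ |g| f) / h)
        (nhdsWithin 0 (Ioi 0))
        (nhds (if 0 < |g| then
                 (if f = |g| then ψ' |g| else φy |g| f) * Real.sign g * v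
               else
                 (if f = 0 then ψ' 0 else φy 0 f) * |v|)) :=
  stmt_2_general φ ψ' φy hψ hφy hdiag f g hfg
end

section
/- Let T, L > 0 and let (f_n) be a sequence of functions from [0,T] to C⁰([0,L];ℝ) which are non-decreasing in time, i.e. for every n and every 0 ≤ s ≤ t ≤ T one has f_n(s,x) ≤ f_n(t,x) for all x ∈ [0,L]. Assume the families {f_n(0)}_n and {f_n(T)}_n are equibounded (in sup norm), and the family {f_n(t) : n ∈ ℕ, t ∈ [0,T]} is equicontinuous on [0,L]. Then there exist a subsequence (not relabelled) and a function f : [0,T] → C⁰([0,L];ℝ), non-decreasing in time in the same sense, such that for every t ∈ [0,T] the sequence f_n(t) converges to f(t) uniformly on [0,L] as n → ∞; moreover the family {f(t)}_{t∈[0,T]} is equicontinuous. -/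
/-! For each point `x` of a countable dense subset of `[0, L]`, the maps `t ↦ fₙ(t, x)` are
monotone and bounded by the bounds at `t = 0` and `t = T`. Helly's selection theorem gives a
subsequence converging at every time and every such `x`: extract along rational times, then along
the countably many discontinuity times of the limit; at the remaining times `fₙ(t, x)` is squeezed
between its values at nearby rational times. Equicontinuity upgrades convergence on a dense set to
uniform convergence, and monotonicity and equicontinuity pass to the limit. -/

open Set Filter Topology

lemma exists_subseq_tendsto_of_forall_abs_le {I : Type*} [Countable I] (v : ℕ → I → ℝ) (C : ℝ)
    (hv : ∀ n i, |v n i| ≤ C) :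
    ∃ σ : ℕ → ℕ, StrictMono σ ∧ ∃ a : I → ℝ, ∀ i, Tendsto (fun k => v (σ k) i) atTop (𝓝 (a i)) := by
  obtain ⟨a, -, σ, hσ, ha⟩ := (isCompact_univ_pi fun _ : I => isCompact_closedBall (0 : ℝ) C)
    |>.tendsto_subseq (x := v) fun n i _ => by simpa using hv n i
  exact ⟨σ, hσ, a, tendsto_pi_nhds.1 ha⟩

lemma tendsto_of_monotone_of_continuousAt {v : ℕ → ℝ → ℝ} (hv : ∀ k, Monotone (v k))
    {S : Set ℝ} (hS : Dense S) {φ : ℝ → ℝ} (hφ : ∀ s ∈ S, Tendsto (fun k => v k s) atTop (𝓝 (φ s)))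
    {t : ℝ} (ht : ContinuousAt φ t) :
    Tendsto (fun k => v k t) atTop (𝓝 (φ t)) := by
  rw [tendsto_order]
  constructor
  · intro a ha
    obtain ⟨l, hlt, hl⟩ := exists_Ioc_subset_of_mem_nhds (ht (lt_mem_nhds ha)) (exists_lt t)
    obtain ⟨s, hsS, hls, hst⟩ := hS.exists_between hlt
    filter_upwards [hφ s hsS (lt_mem_nhds (hl ⟨hls, hst.le⟩))] with k hk
    exact hk.trans_le (hv k hst.le)
  · intro b hb
    obtain ⟨r, htr, hr⟩ := exists_Ico_subset_of_mem_nhds (ht (gt_mem_nhds hb)) (exists_gt t)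
    obtain ⟨s, hsS, hts, hsr⟩ := hS.exists_between htr
    filter_upwards [hφ s hsS (gt_mem_nhds (hr ⟨hts.le, hsr⟩))] with k hk
    exact (hv k hts.le).trans_lt hk

theorem exists_subseq_tendsto_of_monotone {I : Type*} [Countable I] (u : ℕ → I → ℝ → ℝ) (C : ℝ)
    (hmono : ∀ n i, Monotone (u n i)) (hbdd : ∀ n i t, |u n i t| ≤ C) :
    ∃ σ : ℕ → ℕ, StrictMono σ ∧ ∀ i t, ∃ l, Tendsto (fun k => u (σ k) i t) atTop (𝓝 l) := by
  obtain ⟨σ₁, hσ₁, a, ha⟩ :=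
    exists_subseq_tendsto_of_forall_abs_le (fun n (p : I × ℚ) => u n p.1 p.2) C fun n p => hbdd ..
  -- the limit along `σ₁` is known on `ℚ`; `limsup` extends it to a monotone function on `ℝ`
  set φ : I → ℝ → ℝ := fun i t => limsup (fun k => u (σ₁ k) i t) atTop
  have hφ_mono : ∀ i, Monotone (φ i) := fun i s t hst =>
    limsup_le_limsup (Eventually.of_forall fun k => hmono _ i hst)
      (isCoboundedUnder_le_of_le atTop fun k => (abs_le.1 (hbdd _ i s)).1)
      (isBoundedUnder_of ⟨C, fun k => (abs_le.1 (hbdd _ i t)).2⟩)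
  have hφ_rat : ∀ i, ∀ s ∈ range ((↑) : ℚ → ℝ), Tendsto (fun k => u (σ₁ k) i s) atTop (𝓝 (φ i s)) := by
    rintro i _ ⟨q, rfl⟩
    simpa only [φ, (ha (i, q)).limsup_eq] using ha (i, q)
  set D : Set ℝ := ⋃ i, {t | ¬ContinuousAt (φ i) t}
  have : Countable D := (countable_iUnion fun i => (hφ_mono i).countable_not_continuousAt).to_subtype
  obtain ⟨σ₂, hσ₂, b, hb⟩ :=
    exists_subseq_tendsto_of_forall_abs_le (fun n (p : I × D) => u (σ₁ n) p.1 p.2) C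
      fun n p => hbdd ..
  refine ⟨σ₁ ∘ σ₂, hσ₁.comp hσ₂, fun i t => ?_⟩
  by_cases ht : ContinuousAt (φ i) t
  · exact ⟨φ i t, tendsto_of_monotone_of_continuousAt (fun k => hmono _ i) Rat.denseRange_cast
      (fun s hs => (hφ_rat i s hs).comp hσ₂.tendsto_atTop) ht⟩
  · exact ⟨b (i, ⟨t, mem_iUnion.2 ⟨i, ht⟩⟩), hb (i, ⟨t, _⟩)⟩

section Equicontinuous

variable {X α : Type*} [TopologicalSpace X] [PseudoMetricSpace α]

lemma Equicontinuous.cauchySeq_of_dense {u : ℕ → X → α} (hu : Equicontinuous u) {s : Set X}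
    (hs : Dense s) (h : ∀ y ∈ s, CauchySeq (u · y)) (x : X) : CauchySeq (u · x) := by
  rw [Metric.cauchySeq_iff']
  intro ε hε
  have hε3 : 0 < ε / 3 := by positivity
  obtain ⟨y, hxy, hy⟩ :=
    ((Metric.equicontinuousAt_iff_right.1 (hu x) _ hε3).and_frequently
      (mem_closure_iff_frequently.1 (hs x))).exists
  obtain ⟨N, hN⟩ := Metric.cauchySeq_iff'.1 (h y hy) _ hε3
  refine ⟨N, fun n hn => ?_⟩
  calc dist (u n x) (u N x) ≤ dist (u n x) (u n y) + dist (u n y) (u N y) + dist (u N y) (u N x) :=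
        dist_triangle4 ..
    _ < ε / 3 + ε / 3 + ε / 3 := by
        gcongr
        · exact hxy n
        · exact hN n hn
        · exact dist_comm (u N y) (u N x) ▸ hxy N
    _ = ε := by ring

lemma ContinuousMap.exists_tendsto_of_equicontinuous [CompactSpace X] [CompleteSpace α]
    {u : ℕ → C(X, α)} (hu : Equicontinuous fun k => ⇑(u k)) {s : Set X} (hs : Dense s)
    (h : ∀ y ∈ s, CauchySeq fun k => u k y) : ∃ g : C(X, α), Tendsto u atTop (𝓝 g) := by
  choose φ hφ using fun x => cauchySeq_tendsto_of_complete (hu.cauchySeq_of_dense hs h x)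
  have hunif : TendstoUniformly (fun k => ⇑(u k)) φ atTop :=
    UniformFun.tendsto_iff_tendstoUniformly.1 <|
      (hu.tendsto_uniformFun_iff_pi atTop φ).2 (tendsto_pi_nhds.2 hφ)
  exact ⟨⟨φ, hunif.continuous (Frequently.of_forall fun k => (u k).continuous)⟩,
    ContinuousMap.tendsto_iff_tendstoUniformly.2 hunif⟩

end Equicontinuous

theorem ContinuousMap.exists_subseq_tendsto_of_monotone {X : Type*} [TopologicalSpace X]
    [CompactSpace X] [TopologicalSpace.SeparableSpace X] (g : ℕ → ℝ → C(X, ℝ)) (C : ℝ)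
    (hmono : ∀ n, Monotone (g n)) (hbdd : ∀ n t x, |g n t x| ≤ C)
    (hequi : Equicontinuous fun p : ℕ × ℝ => ⇑(g p.1 p.2)) :
    ∃ σ : ℕ → ℕ, StrictMono σ ∧ ∀ t, ∃ G, Tendsto (fun k => g (σ k) t) atTop (𝓝 G) := by
  obtain ⟨s, hs_count, hs_dense⟩ := TopologicalSpace.exists_countable_dense X
  have : Countable s := hs_count.to_subtype
  obtain ⟨σ, hσ, hlim⟩ := _root_.exists_subseq_tendsto_of_monotone (I := s) (fun n x t => g n t x) C
    (fun n x _ _ hst => hmono n hst x) fun n x t => hbdd n t x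
  refine ⟨σ, hσ, fun t => exists_tendsto_of_equicontinuous (hequi.comp fun k => (σ k, t)) hs_dense
    fun x hx => ?_⟩
  obtain ⟨l, hl⟩ := hlim ⟨x, hx⟩ t
  exact hl.cauchySeq

theorem stmt_4_general
    (T L : ℝ) (hT : 0 < T)
    (f : ℕ → ℝ → C(Icc (0:ℝ) L, ℝ))
    -- non-decreasing in time
    (hmono : ∀ n : ℕ, ∀ s t : ℝ, 0 ≤ s → s ≤ t → t ≤ T →
      ∀ x : Icc (0:ℝ) L, f n s x ≤ f n t x)
    -- equiboundedness of {fₙ(0)} and {fₙ(T)}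
    (hbdd : ∃ C : ℝ, ∀ n : ℕ, ‖f n 0‖ ≤ C ∧ ‖f n T‖ ≤ C)
    -- equicontinuity, uniform with respect to t ∈ [0,T]
    (hequi : ∀ ε : ℝ, 0 < ε → ∃ δ : ℝ, 0 < δ ∧ ∀ n : ℕ, ∀ t ∈ Icc (0:ℝ) T,
      ∀ x y : Icc (0:ℝ) L, dist x y < δ → |f n t x - f n t y| < ε) :
    ∃ σ : ℕ → ℕ, StrictMono σ ∧ ∃ F : ℝ → C(Icc (0:ℝ) L, ℝ),
      (∀ s t : ℝ, 0 ≤ s → s ≤ t → t ≤ T → ∀ x : Icc (0:ℝ) L, F s x ≤ F t x) ∧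
      (∀ t ∈ Icc (0:ℝ) T, Tendsto (fun k => f (σ k) t) atTop (𝓝 (F t))) ∧
      (∀ ε : ℝ, 0 < ε → ∃ δ : ℝ, 0 < δ ∧ ∀ t ∈ Icc (0:ℝ) T,
        ∀ x y : Icc (0:ℝ) L, dist x y < δ → |F t x - F t y| < ε) := by
  obtain ⟨C, hC⟩ := hbdd
  -- clamping time to `[0, T]` gives maps monotone on all of `ℝ`
  set g : ℕ → ℝ → C(Icc (0:ℝ) L, ℝ) := fun n t => f n (projIcc 0 T hT.le t)
  have hg_mono : ∀ n, Monotone (g n) := fun n s t hst x =>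
    hmono n _ _ (projIcc 0 T hT.le s).2.1 (monotone_projIcc hT.le hst) (projIcc 0 T hT.le t).2.2 x
  have hg_bdd : ∀ n t x, |g n t x| ≤ C := by
    intro n t x
    obtain ⟨h0t, htT⟩ := (projIcc 0 T hT.le t).2
    calc |g n t x| ≤ max |f n 0 x| |f n T x| :=
          abs_le_max_abs_abs (hmono n _ _ le_rfl h0t htT x) (hmono n _ _ h0t htT le_rfl x)
      _ ≤ C := max_le (((f n 0).norm_coe_le_norm x).trans (hC n).1)
          (((f n T).norm_coe_le_norm x).trans (hC n).2)
  have hg_equi : UniformEquicontinuous fun p : ℕ × ℝ => ⇑(g p.1 p.2) :=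
    Metric.uniformEquicontinuous_iff.2 fun ε hε => (hequi ε hε).imp fun δ ⟨hδ, h⟩ =>
      ⟨hδ, fun x y hxy p => (Real.dist_eq _ _).trans_lt (h p.1 _ (projIcc 0 T hT.le p.2).2 x y hxy)⟩
  obtain ⟨σ, hσ, hconv⟩ :=
    ContinuousMap.exists_subseq_tendsto_of_monotone g C hg_mono hg_bdd hg_equi.equicontinuous
  choose F hF using hconv
  have hF_Icc : ∀ t ∈ Icc (0:ℝ) T, Tendsto (fun k => f (σ k) t) atTop (𝓝 (F t)) := fun t ht => by
    simpa only [g, projIcc_of_mem hT.le ht] using hF t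
  have hF_apply : ∀ t ∈ Icc (0:ℝ) T, ∀ x, Tendsto (fun k => f (σ k) t x) atTop (𝓝 (F t x)) :=
    fun t ht x => ((continuous_eval_const x).tendsto _).comp (hF_Icc t ht)
  refine ⟨σ, hσ, F, fun s t hs hst htT x => ?_, hF_Icc, fun ε hε => ?_⟩
  · exact le_of_tendsto_of_tendsto' (hF_apply s ⟨hs, hst.trans htT⟩ x)
      (hF_apply t ⟨hs.trans hst, htT⟩ x) fun k => hmono _ s t hs hst htT x
  · obtain ⟨δ, hδ, h⟩ := hequi (ε / 2) (half_pos hε)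
    refine ⟨δ, hδ, fun t ht x y hxy => ?_⟩
    have hFt : |F t x - F t y| ≤ ε / 2 :=
      le_of_tendsto' ((hF_apply t ht x).sub (hF_apply t ht y)).abs fun k => (h (σ k) t ht x y hxy).le
    linarith

/-- Helly-type selection theorem for sequences of functions `[0,T] → C⁰([0,L];ℝ)` that are
non-decreasing in time, with `{fₙ(0)}`, `{fₙ(T)}` equibounded and `{fₙ(t)}` equicontinuous
uniformly in `t`: a subsequence converges, for every `t`, uniformly on `[0,L]` to a limit
`F(t)`, `F` is non-decreasing in time, and `{F(t)}` is equicontinuous. -/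
theorem stmt_4
    (T L : ℝ) (hT : 0 < T) (hL : 0 < L)
    (f : ℕ → ℝ → C(Icc (0:ℝ) L, ℝ))
    -- non-decreasing in time
    (hmono : ∀ n : ℕ, ∀ s t : ℝ, 0 ≤ s → s ≤ t → t ≤ T →
      ∀ x : Icc (0:ℝ) L, f n s x ≤ f n t x)
    -- equiboundedness of {fₙ(0)} and {fₙ(T)}
    (hbdd : ∃ C : ℝ, ∀ n : ℕ, ‖f n 0‖ ≤ C ∧ ‖f n T‖ ≤ C)
    -- equicontinuity, uniform with respect to t ∈ [0,T]
    (hequi : ∀ ε : ℝ, 0 < ε → ∃ δ : ℝ, 0 < δ ∧ ∀ n : ℕ, ∀ t ∈ Icc (0:ℝ) T,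
      ∀ x y : Icc (0:ℝ) L, dist x y < δ → |f n t x - f n t y| < ε) :
    ∃ σ : ℕ → ℕ, StrictMono σ ∧ ∃ F : ℝ → C(Icc (0:ℝ) L, ℝ),
      (∀ s t : ℝ, 0 ≤ s → s ≤ t → t ≤ T → ∀ x : Icc (0:ℝ) L, F s x ≤ F t x) ∧
      (∀ t ∈ Icc (0:ℝ) T, Tendsto (fun k => f (σ k) t) atTop (𝓝 (F t))) ∧
      (∀ ε : ℝ, 0 < ε → ∃ δ : ℝ, 0 < δ ∧ ∀ t ∈ Icc (0:ℝ) T,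
        ∀ x y : Icc (0:ℝ) L, dist x y < δ → |F t x - F t y| < ε) :=
  stmt_4_general T L hT f hmono hbdd hequi
end

section
/- Let (X, ‖·‖) be a normed space, let f : [a,b] → X be a bounded measurable function, and let g ∈ L¹(a,b) be nonnegative. Assume that for every a ≤ s ≤ t ≤ b one has ‖f(t) − f(s)‖² ≤ ∫ₛᵗ ‖f(t) − f(τ)‖ g(τ) dτ. Then for every a ≤ s ≤ t ≤ b it holds ‖f(t) − f(s)‖ ≤ ∫ₛᵗ g(τ) dτ. -/
open Set MeasureTheory Filter

/- Write φ(u) = ‖f t − f u‖ and G(u) = ∫ᵤᵗ g. A bound φ ≤ G + e on [a, t] with e ≥ 0 improves,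
since G is antitone, to φ(u)² ≤ (G(u) + e) G(u) ≤ (G(u) + e/2)², i.e. to φ ≤ G + e/2.
Starting from the crude bound φ ≤ 2 sup ‖f‖ and halving forever gives φ ≤ G. -/

theorem le_add_half_of_sq_le_add_mul {x y e : ℝ} (hy : 0 ≤ y) (he : 0 ≤ e)
    (h : x ^ 2 ≤ (y + e) * y) : x ≤ y + e / 2 := by
  nlinarith [sq_nonneg (x - (y + e / 2)), sq_nonneg e]

theorem le_of_forall_le_add_div_two_pow {x y M : ℝ} (h : ∀ n : ℕ, x ≤ y + M / 2 ^ n) :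
    x ≤ y := by
  have hlim : Tendsto (fun n : ℕ => y + M / 2 ^ n) atTop (nhds y) := by
    simpa using tendsto_const_nhds.add <| (tendsto_const_div_atTop_nhds_zero_nat M).comp
      (tendsto_pow_atTop_atTop_of_one_lt one_lt_two)
  exact ge_of_tendsto' hlim h

theorem MeasureTheory.IntegrableOn.intervalIntegrable_of_mem_Icc {g : ℝ → ℝ} {a t u : ℝ}
    (hg : IntegrableOn g (Icc a t)) (hu : u ∈ Icc a t) : IntervalIntegrable g volume u t :=
  (intervalIntegrable_iff_integrableOn_Icc_of_le hu.2).2 (hg.mono_set (Icc_subset_Icc_left hu.1))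

theorem antitoneOn_intervalIntegral_left {g : ℝ → ℝ} {a t : ℝ}
    (hg : IntegrableOn g (Icc a t)) (hg0 : ∀ τ ∈ Icc a t, 0 ≤ g τ) :
    AntitoneOn (fun u => ∫ τ in u..t, g τ) (Icc a t) := fun _ hu _ hv huv =>
  intervalIntegral.integral_mono_interval huv hv.2 le_rfl
    ((ae_restrict_iff' measurableSet_Ioc).2 <| ae_of_all _ fun x hx =>
      hg0 x ⟨hu.1.trans hx.1.le, hx.2⟩) (hg.intervalIntegrable_of_mem_Icc hu)

theorem intervalIntegral_left_nonneg {g : ℝ → ℝ} {a t u : ℝ}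
    (hg : IntegrableOn g (Icc a t)) (hg0 : ∀ τ ∈ Icc a t, 0 ≤ g τ) (hu : u ∈ Icc a t) :
    0 ≤ ∫ τ in u..t, g τ := by
  simpa using antitoneOn_intervalIntegral_left hg hg0 hu ⟨hu.1.trans hu.2, le_rfl⟩ hu.2

theorem le_intervalIntegral_add_half_of_sq_le {φ g : ℝ → ℝ} {a t e : ℝ}
    (hφg : IntegrableOn (fun τ => φ τ * g τ) (Icc a t))
    (hg : IntegrableOn g (Icc a t)) (hg0 : ∀ τ ∈ Icc a t, 0 ≤ g τ)
    (h : ∀ u ∈ Icc a t, φ u ^ 2 ≤ ∫ τ in u..t, φ τ * g τ)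
    (he : 0 ≤ e) (hφe : ∀ u ∈ Icc a t, φ u ≤ (∫ τ in u..t, g τ) + e) :
    ∀ u ∈ Icc a t, φ u ≤ (∫ τ in u..t, g τ) + e / 2 := by
  intro u hu
  refine le_add_half_of_sq_le_add_mul (intervalIntegral_left_nonneg hg hg0 hu) he ?_
  calc φ u ^ 2 ≤ ∫ τ in u..t, φ τ * g τ := h u hu
    _ ≤ ∫ τ in u..t, ((∫ τ in u..t, g τ) + e) * g τ := by
      refine intervalIntegral.integral_mono_on hu.2 (hφg.intervalIntegrable_of_mem_Icc hu)
        ((hg.intervalIntegrable_of_mem_Icc hu).const_mul _) fun τ hτ => ?_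
      have hτ' : τ ∈ Icc a t := ⟨hu.1.trans hτ.1, hτ.2⟩
      have hG := antitoneOn_intervalIntegral_left hg hg0 hu hτ' hτ.1
      exact mul_le_mul_of_nonneg_right ((hφe τ hτ').trans (add_le_add_left hG e)) (hg0 τ hτ')
    _ = ((∫ τ in u..t, g τ) + e) * ∫ τ in u..t, g τ := intervalIntegral.integral_const_mul _ _

theorem le_intervalIntegral_of_sq_le_intervalIntegral_mul {φ g : ℝ → ℝ} {a t M : ℝ}
    (hφ : AEStronglyMeasurable φ (volume.restrict (Icc a t)))
    (hφM : ∀ u ∈ Icc a t, |φ u| ≤ M)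
    (hg : IntegrableOn g (Icc a t)) (hg0 : ∀ τ ∈ Icc a t, 0 ≤ g τ)
    (h : ∀ u ∈ Icc a t, φ u ^ 2 ≤ ∫ τ in u..t, φ τ * g τ) :
    ∀ u ∈ Icc a t, φ u ≤ ∫ τ in u..t, g τ := by
  intro u hu
  have hM : 0 ≤ M := (abs_nonneg _).trans (hφM u hu)
  have hφg : IntegrableOn (fun τ => φ τ * g τ) (Icc a t) :=
    hg.bdd_mul hφ <| (ae_restrict_iff' measurableSet_Icc).2 <| ae_of_all _ hφM
  have hφ_le : ∀ n : ℕ, ∀ v ∈ Icc a t, φ v ≤ (∫ τ in v..t, g τ) + M / 2 ^ n := by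
    intro n
    induction n with
    | zero =>
      intro v hv
      rw [pow_zero, div_one]
      exact (le_abs_self _).trans <| (hφM v hv).trans <|
        le_add_of_nonneg_left (intervalIntegral_left_nonneg hg hg0 hv)
    | succ n ih =>
      rw [pow_succ, ← div_div]
      exact le_intervalIntegral_add_half_of_sq_le hφg hg hg0 h (by positivity) ih
  exact le_of_forall_le_add_div_two_pow fun n => hφ_le n u hu

theorem stmt_6_general
    {X : Type*} [NormedAddCommGroup X]
    [MeasurableSpace X] [BorelSpace X]
    (a b : ℝ)
    (f : ℝ → X) (hf_meas : Measurable f)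
    (hf_bdd : ∃ C : ℝ, ∀ t ∈ Icc a b, ‖f t‖ ≤ C)
    (g : ℝ → ℝ) (hg_int : IntegrableOn g (Icc a b))
    (hg_nonneg : ∀ τ ∈ Icc a b, 0 ≤ g τ)
    (hineq : ∀ s t : ℝ, a ≤ s → s ≤ t → t ≤ b →
      ‖f t - f s‖ ^ 2 ≤ ∫ τ in s..t, ‖f t - f τ‖ * g τ) :
    ∀ s t : ℝ, a ≤ s → s ≤ t → t ≤ b → ‖f t - f s‖ ≤ ∫ τ in s..t, g τ := by
  intro s t hs hst htb
  obtain ⟨C, hC⟩ := hf_bdd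
  have hsub : Icc a t ⊆ Icc a b := Icc_subset_Icc_right htb
  have hbound : ∀ u ∈ Icc a t, |‖f t - f u‖| ≤ C + C := fun u hu => by
    rw [abs_norm]
    exact (norm_sub_le _ _).trans (add_le_add (hC t ⟨hs.trans hst, htb⟩) (hC u (hsub hu)))
  exact le_intervalIntegral_of_sq_le_intervalIntegral_mul
    (hf_meas.const_sub (f t)).norm.aestronglyMeasurable hbound
    (hg_int.mono_set hsub) (fun τ hτ => hg_nonneg τ (hsub hτ))
    (fun u hu => hineq u t hu.1 hu.2 htb) s ⟨hs, hst⟩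

/-- Gronwall-type lemma: if a bounded measurable `f : [a,b] → X` satisfies
`‖f(t) − f(s)‖² ≤ ∫ₛᵗ ‖f(t) − f(τ)‖ g(τ) dτ` for all `a ≤ s ≤ t ≤ b`, with `g ∈ L¹(a,b)`
nonnegative, then `‖f(t) − f(s)‖ ≤ ∫ₛᵗ g(τ) dτ`. -/
theorem stmt_6
    {X : Type*} [NormedAddCommGroup X] [NormedSpace ℝ X]
    [MeasurableSpace X] [BorelSpace X]
    (a b : ℝ) (hab : a ≤ b)
    (f : ℝ → X) (hf_meas : Measurable f)
    (hf_bdd : ∃ C : ℝ, ∀ t ∈ Icc a b, ‖f t‖ ≤ C)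
    (g : ℝ → ℝ) (hg_int : IntegrableOn g (Icc a b))
    (hg_nonneg : ∀ τ ∈ Icc a b, 0 ≤ g τ)
    (hineq : ∀ s t : ℝ, a ≤ s → s ≤ t → t ≤ b →
      ‖f t - f s‖ ^ 2 ≤ ∫ τ in s..t, ‖f t - f τ‖ * g τ) :
    ∀ s t : ℝ, a ≤ s → s ≤ t → t ≤ b → ‖f t - f s‖ ≤ ∫ τ in s..t, g τ :=
  stmt_6_general a b f hf_meas hf_bdd g hg_int hg_nonneg hineq
end

section
/- Let E : [0,1] → ℝ be twice continuously differentiable with E''(α) > 0 for every α ∈ [0,1], and set m := min_{α∈[0,1]} ( (1/2)E''(α)E(α) − E'(α)² ) and M := max_{α∈[0,1]} E''(α). Assume m > 0. Then for every α ∈ [0,1] and every v, x, y ∈ ℝ one has (1/2)E''(α)v²x² + 2E'(α)v·x·y + E(α)y² ≥ 2(m/M)·y². -/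
open Set

/-- Completing the square, `a Q(t, y) = 2 (a t / 2 + b y)² + 2 (a c / 2 - b²) y²`. -/
theorem two_mul_div_mul_sq_le_of_le_discr {a b c m M : ℝ} (ha : 0 < a) (haM : a ≤ M)
    (hm : 0 ≤ m) (hmabc : m ≤ 1 / 2 * a * c - b ^ 2) (t y : ℝ) :
    2 * (m / M) * y ^ 2 ≤ 1 / 2 * a * t ^ 2 + 2 * b * t * y + c * y ^ 2 := by
  have hscaled : 2 * m * y ^ 2 ≤ a * (1 / 2 * a * t ^ 2 + 2 * b * t * y + c * y ^ 2) := by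
    nlinarith [sq_nonneg (a * t / 2 + b * y), mul_le_mul_of_nonneg_right hmabc (sq_nonneg y)]
  calc 2 * (m / M) * y ^ 2 ≤ 2 * (m / a) * y ^ 2 := by gcongr
    _ = 2 * m * y ^ 2 / a := by ring
    _ ≤ 1 / 2 * a * t ^ 2 + 2 * b * t * y + c * y ^ 2 := by rwa [div_le_iff₀' ha]

/-- Lower bound for the quadratic form of the Hessian of `(α,v) ↦ (1/2)E(α)v²`:
for a hardening material (`(1/2)E''E − (E')² > 0`, `E'' > 0`) with
`m = min((1/2)E''E − (E')²)` and `M = max E''` one has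
`(1/2)E''(α)v²x² + 2E'(α)vxy + E(α)y² ≥ 2(m/M)y²`. -/
theorem stmt_8
    (E E' E'' : ℝ → ℝ)
    -- E is C² on [0,1] with first and second derivatives E', E''
    (hE' : ∀ α ∈ Icc (0:ℝ) 1, HasDerivWithinAt E (E' α) (Icc 0 1) α)
    (hE'' : ∀ α ∈ Icc (0:ℝ) 1, HasDerivWithinAt E' (E'' α) (Icc 0 1) α)
    (hE''cont : ContinuousOn E'' (Icc 0 1))
    (hE''pos : ∀ α ∈ Icc (0:ℝ) 1, 0 < E'' α)
    (m M : ℝ)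
    (hm : m = sInf ((fun α => (1/2) * E'' α * E α - (E' α) ^ 2) '' Icc (0:ℝ) 1))
    (hM : M = sSup (E'' '' Icc (0:ℝ) 1))
    (hmpos : 0 < m) :
    ∀ α ∈ Icc (0:ℝ) 1, ∀ v x y : ℝ,
      2 * (m / M) * y ^ 2 ≤
        (1/2) * E'' α * v ^ 2 * x ^ 2 + 2 * E' α * v * x * y + E α * y ^ 2 := by
  intro α hα v x y
  have hEcont : ContinuousOn E (Icc 0 1) := fun a ha => (hE' a ha).continuousWithinAt
  have hE'cont : ContinuousOn E' (Icc 0 1) := fun a ha => (hE'' a ha).continuousWithinAt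
  have hdiscr_cont : ContinuousOn (fun α => (1/2) * E'' α * E α - (E' α) ^ 2) (Icc 0 1) :=
    ((continuousOn_const.mul hE''cont).mul hEcont).sub (hE'cont.pow 2)
  have hmα : m ≤ (1/2) * E'' α * E α - (E' α) ^ 2 :=
    hm ▸ csInf_le (isCompact_Icc.bddBelow_image hdiscr_cont) (mem_image_of_mem _ hα)
  have hMα : E'' α ≤ M :=
    hM ▸ le_csSup (isCompact_Icc.bddAbove_image hE''cont) (mem_image_of_mem _ hα)
  convert two_mul_div_mul_sq_le_of_le_discr (hE''pos α hα) hMα hmpos.le hmα (v * x) y using 1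
  ring
end

section
/- Let φ : 𝒯 → [0,∞) and λ > 0. Assume that ψ(z) := φ(z,z) is continuously differentiable on [0,∞) and λ-convex, i.e. ψ(θz^a + (1−θ)z^b) ≤ θψ(z^a) + (1−θ)ψ(z^b) + (λ/2)θ(1−θ)|z^a − z^b|² for all θ ∈ [0,1] and z^a, z^b ≥ 0; that for every z > 0 the map y ↦ φ(y,z) is continuously differentiable and convex on [0,z]; and that ∂_yφ(z,z) = ψ'(z) for every z > 0. Then for every z ≥ 0 the function y ↦ φ(y, max(z,y)) is λ-convex on [0,∞). -/
open Set

/-!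
Adding `λ/2 · y²` turns `λ`-convexity into plain convexity, so it suffices to show that
`g y := φ(y, max(z, y)) + λ/2 · y²` is convex on `[0, ∞)`. On `[0, z]` it is the convex function
`φ(·, z) + λ/2 · y²`, on `[z, ∞)` it is the convex function `ψ + λ/2 · y²`, and the assumption
`∂_yφ(z, z) = ψ'(z)` makes the one-sided derivatives of the two pieces agree at `z`. Two convex
pieces whose one-sided derivatives at the junction are in the right order glue to a convex function:
secant slopes to the left of the junction stay below the left derivative, those to the right stay
above the right derivative.
-/

def LambdaConvexOn (lam : ℝ) (s : Set ℝ) (f : ℝ → ℝ) : Prop :=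
  ∀ θ ∈ Icc (0 : ℝ) 1, ∀ a ∈ s, ∀ b ∈ s,
    f (θ * a + (1 - θ) * b) ≤ θ * f a + (1 - θ) * f b + lam / 2 * θ * (1 - θ) * |a - b| ^ 2

theorem lambdaConvexOn_iff_convexOn_add_sq {lam : ℝ} {s : Set ℝ} {f : ℝ → ℝ}
    (hs : Convex ℝ s) :
    LambdaConvexOn lam s f ↔ ConvexOn ℝ s (fun x => f x + lam / 2 * x ^ 2) := by
  refine ⟨fun h => ⟨hs, fun x hx y hy p q hp hq hpq => ?_⟩, fun h θ hθ a ha b hb => ?_⟩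
  · obtain rfl : q = 1 - p := by linarith
    have key := h p ⟨hp, by linarith⟩ x hx y hy
    simp only [smul_eq_mul, sq_abs] at key ⊢
    linear_combination key
  · have key := h.2 ha hb hθ.1 (sub_nonneg.2 hθ.2) (by ring)
    simp only [smul_eq_mul] at key
    rw [sq_abs]
    linear_combination key

section ThreeSlopes

variable {f : ℝ → ℝ} {x y w : ℝ}

theorem slope_le_slope_left_of_slope_le_slope (hxy : x < y) (hyw : y < w)
    (h : slope f x y ≤ slope f y w) : slope f x y ≤ slope f x w := by
  simp only [slope_def_field] at h ⊢
  rw [div_le_div_iff₀ (by linarith) (by linarith)] at h ⊢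
  nlinarith

theorem slope_le_slope_right_of_slope_le_slope (hxy : x < y) (hyw : y < w)
    (h : slope f x y ≤ slope f y w) : slope f x w ≤ slope f y w := by
  simp only [slope_def_field] at h ⊢
  rw [div_le_div_iff₀ (by linarith) (by linarith)] at h ⊢
  nlinarith

end ThreeSlopes

theorem ConvexOn.union_of_hasDerivWithinAt {s t : Set ℝ} {f : ℝ → ℝ} {c d₁ d₂ : ℝ}
    (hs : ConvexOn ℝ s f) (ht : ConvexOn ℝ t f) (hsc : IsGreatest s c) (htc : IsLeast t c)
    (hd₁ : HasDerivWithinAt f d₁ s c) (hd₂ : HasDerivWithinAt f d₂ t c) (hd : d₁ ≤ d₂) :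
    ConvexOn ℝ (s ∪ t) f := by
  have mem_s : ∀ {u v}, u ∈ s ∪ t → u ≤ v → v ≤ c → v ∈ s := by
    rintro u v (hu | hu) huv hvc
    · exact hs.1.ordConnected.out hu hsc.1 ⟨huv, hvc⟩
    · obtain rfl : v = c := le_antisymm hvc ((htc.2 hu).trans huv)
      exact hsc.1
  have mem_t : ∀ {u v}, v ∈ s ∪ t → c ≤ u → u ≤ v → u ∈ t := by
    rintro u v (hv | hv) hcu huv
    · obtain rfl : u = c := le_antisymm (huv.trans (hsc.2 hv)) hcu
      exact htc.1
    · exact ht.1.ordConnected.out htc.1 hv ⟨hcu, huv⟩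
  have hconvex : Convex ℝ (s ∪ t) := convex_iff_ordConnected.2
    ⟨fun u hu v hv x hx => (le_total x c).elim
      (fun hxc => Or.inl (mem_s hu hx.1 hxc)) (fun hcx => Or.inr (mem_t hv hcx hx.2))⟩
  have slope_le_left : ∀ u ∈ s, u < c → slope f u c ≤ d₁ := fun u hu huc =>
    hs.slope_le_of_hasDerivWithinAt hu hsc.1 huc hd₁
  have right_le_slope : ∀ v ∈ t, c < v → d₂ ≤ slope f c v := fun v hv hcv =>
    ht.le_slope_of_hasDerivWithinAt htc.1 hv hcv hd₂
  refine convexOn_of_slope_mono_adjacent hconvex fun {x y w} hx hw hxy hyw => ?_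
  rcases le_or_gt w c with hwc | hcw
  · exact hs.slope_mono_adjacent (mem_s hx le_rfl ((hxy.trans hyw).le.trans hwc))
      (mem_s hx (hxy.trans hyw).le hwc) hxy hyw
  rcases le_or_gt c x with hcx | hxc
  · exact ht.slope_mono_adjacent (mem_t hw hcx (hxy.trans hyw).le)
      (mem_t hw (hcx.trans (hxy.trans hyw).le) le_rfl) hxy hyw
  have hxs : x ∈ s := mem_s hx le_rfl hxc.le
  have hwt : w ∈ t := mem_t hw hcw.le le_rfl
  rw [← slope_def_field, ← slope_def_field]
  rcases lt_trichotomy y c with hyc | rfl | hcy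
  · have hys : y ∈ s := mem_s hx hxy.le hyc.le
    calc slope f x y ≤ slope f y c := by
          simpa only [slope_def_field] using hs.slope_mono_adjacent hxs hsc.1 hxy hyc
      _ ≤ slope f y w := slope_le_slope_left_of_slope_le_slope hyc hcw
          ((slope_le_left y hys hyc).trans (hd.trans (right_le_slope w hwt hcw)))
  · exact (slope_le_left x hxs hxy).trans (hd.trans (right_le_slope w hwt hyw))
  · have hyt : y ∈ t := mem_t hw hcy.le hyw.le
    calc slope f x y ≤ slope f c y := slope_le_slope_right_of_slope_le_slope hxc hcy
          ((slope_le_left x hxs hxc).trans (hd.trans (right_le_slope y hyt hcy)))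
      _ ≤ slope f y w := by
          simpa only [slope_def_field] using ht.slope_mono_adjacent htc.1 hwt hcy hyw

theorem convexOn_Ici_apply_max_of_hasDerivWithinAt {Φ : ℝ → ℝ → ℝ} {a z d : ℝ} (haz : a ≤ z)
    (hleft : ConvexOn ℝ (Icc a z) (fun y => Φ y z)) (hright : ConvexOn ℝ (Ici z) (fun y => Φ y y))
    (hd_left : HasDerivWithinAt (fun y => Φ y z) d (Icc a z) z)
    (hd_diag : HasDerivWithinAt (fun y => Φ y y) d (Ici z) z) :
    ConvexOn ℝ (Ici a) (fun y => Φ y (max z y)) := by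
  have eq_left : EqOn (fun y => Φ y z) (fun y => Φ y (max z y)) (Icc a z) := fun y hy => by
    simp only [max_eq_left hy.2]
  have eq_diag : EqOn (fun y => Φ y y) (fun y => Φ y (max z y)) (Ici z) := fun y hy => by
    simp only [max_eq_right (mem_Ici.1 hy)]
  rw [← Icc_union_Ici_eq_Ici haz]
  exact (hleft.congr eq_left).union_of_hasDerivWithinAt (hright.congr eq_diag)
    (isGreatest_Icc haz) isLeast_Ici
    (hd_left.congr_of_mem (fun y hy => (eq_left hy).symm) (right_mem_Icc.2 haz))
    (hd_diag.congr_of_mem (fun y hy => (eq_diag hy).symm) self_mem_Ici) le_rfl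

theorem hasDerivAt_half_mul_sq (lam x : ℝ) :
    HasDerivAt (fun w : ℝ => lam / 2 * w ^ 2) (lam * x) x :=
  ((hasDerivAt_pow 2 x).const_mul (lam / 2)).congr_deriv (by push_cast; ring)

theorem stmt_9_general
    (φ : ℝ → ℝ → ℝ) (ψ' : ℝ → ℝ) (φy : ℝ → ℝ → ℝ) (lam : ℝ) (hlam : 0 < lam)
    -- ψ is C¹ on [0,∞) with derivative ψ'
    (hψ : ∀ z ∈ Ici (0:ℝ), HasDerivWithinAt (fun w => φ w w) (ψ' z) (Ici 0) z)
    -- ψ is λ-convex on [0,∞)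
    (hψlam : ∀ θ ∈ Icc (0:ℝ) 1, ∀ za zb : ℝ, 0 ≤ za → 0 ≤ zb →
      φ (θ * za + (1 - θ) * zb) (θ * za + (1 - θ) * zb) ≤
        θ * φ za za + (1 - θ) * φ zb zb + (lam / 2) * θ * (1 - θ) * |za - zb| ^ 2)
    -- for every z > 0, y ↦ φ(y,z) is C¹ and convex on [0,z], with derivative φy(·,z)
    (hφy : ∀ z : ℝ, 0 < z → ∀ y ∈ Icc (0:ℝ) z,
      HasDerivWithinAt (fun w => φ w z) (φy y z) (Icc 0 z) y)
    (hconv : ∀ z : ℝ, 0 < z → ConvexOn ℝ (Icc 0 z) (fun y => φ y z))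
    -- ∂_yφ(z,z) = ψ'(z) for every z > 0
    (hdiag : ∀ z : ℝ, 0 < z → φy z z = ψ' z) :
    ∀ z : ℝ, 0 ≤ z → ∀ θ ∈ Icc (0:ℝ) 1, ∀ a b : ℝ, 0 ≤ a → 0 ≤ b →
      φ (θ * a + (1 - θ) * b) (max z (θ * a + (1 - θ) * b)) ≤
        θ * φ a (max z a) + (1 - θ) * φ b (max z b) +
          (lam / 2) * θ * (1 - θ) * |a - b| ^ 2 := by
  intro z hz θ hθ a b ha hb
  suffices h : LambdaConvexOn lam (Ici 0) (fun y => φ y (max z y)) from h θ hθ a ha b hb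
  have hψ_conv : ConvexOn ℝ (Ici 0) (fun w => φ w w + lam / 2 * w ^ 2) :=
    (lambdaConvexOn_iff_convexOn_add_sq (convex_Ici 0)).1
      fun θ hθ a ha b hb => hψlam θ hθ a b ha hb
  rw [lambdaConvexOn_iff_convexOn_add_sq (convex_Ici 0)]
  rcases hz.eq_or_lt with rfl | hz
  · exact hψ_conv.congr fun y hy => by rw [max_eq_right (mem_Ici.1 hy)]
  have hquad : ConvexOn ℝ (Icc 0 z) (fun y => lam / 2 * y ^ 2) :=
    ((Even.convexOn_pow even_two).smul (half_pos hlam).le).subset (subset_univ _) (convex_Icc 0 z)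
  refine convexOn_Ici_apply_max_of_hasDerivWithinAt (Φ := fun y w => φ y w + lam / 2 * y ^ 2)
    (d := ψ' z + lam * z) hz.le ((hconv z hz).add hquad)
    (hψ_conv.subset (Ici_subset_Ici.2 hz.le) (convex_Ici z)) ?_ ?_
  · rw [← hdiag z hz]
    exact (hφy z hz z (right_mem_Icc.2 hz.le)).add (hasDerivAt_half_mul_sq lam z).hasDerivWithinAt
  · exact ((hψ z hz.le).mono (Ici_subset_Ici.2 hz.le)).add
      (hasDerivAt_half_mul_sq lam z).hasDerivWithinAt

/-- If `ψ(z) = φ(z,z)` is `λ`-convex and `y ↦ φ(y,z)` is C¹ and convex on `[0,z]` with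
`∂_yφ(z,z) = ψ'(z)`, then for every `z ≥ 0` the function `y ↦ φ(y, max(z,y))` is
`λ`-convex on `[0,∞)`. -/
theorem stmt_9
    (φ : ℝ → ℝ → ℝ) (ψ' : ℝ → ℝ) (φy : ℝ → ℝ → ℝ) (lam : ℝ) (hlam : 0 < lam)
    -- φ maps 𝒯 into [0,∞)
    (hφ_nonneg : ∀ y z : ℝ, 0 ≤ y → y ≤ z → 0 ≤ φ y z)
    -- ψ is C¹ on [0,∞) with derivative ψ'
    (hψ : ∀ z ∈ Ici (0:ℝ), HasDerivWithinAt (fun w => φ w w) (ψ' z) (Ici 0) z)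
    (hψ'cont : ContinuousOn ψ' (Ici 0))
    -- ψ is λ-convex on [0,∞)
    (hψlam : ∀ θ ∈ Icc (0:ℝ) 1, ∀ za zb : ℝ, 0 ≤ za → 0 ≤ zb →
      φ (θ * za + (1 - θ) * zb) (θ * za + (1 - θ) * zb) ≤
        θ * φ za za + (1 - θ) * φ zb zb + (lam / 2) * θ * (1 - θ) * |za - zb| ^ 2)
    -- for every z > 0, y ↦ φ(y,z) is C¹ and convex on [0,z], with derivative φy(·,z)
    (hφy : ∀ z : ℝ, 0 < z → ∀ y ∈ Icc (0:ℝ) z,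
      HasDerivWithinAt (fun w => φ w z) (φy y z) (Icc 0 z) y)
    (hφycont : ∀ z : ℝ, 0 < z → ContinuousOn (fun y => φy y z) (Icc 0 z))
    (hconv : ∀ z : ℝ, 0 < z → ConvexOn ℝ (Icc 0 z) (fun y => φ y z))
    -- ∂_yφ(z,z) = ψ'(z) for every z > 0
    (hdiag : ∀ z : ℝ, 0 < z → φy z z = ψ' z) :
    ∀ z : ℝ, 0 ≤ z → ∀ θ ∈ Icc (0:ℝ) 1, ∀ a b : ℝ, 0 ≤ a → 0 ≤ b →
      φ (θ * a + (1 - θ) * b) (max z (θ * a + (1 - θ) * b)) ≤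
        θ * φ a (max z a) + (1 - θ) * φ b (max z b) +
          (lam / 2) * θ * (1 - θ) * |a - b| ^ 2 :=
  stmt_9_general φ ψ' φy lam hlam hψ hψlam hφy hconv hdiag
end
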